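/- arXiv:1910.11998 — 2 statements merged into one kernel-verified Lean document; each statement's English description precedes it below -/
import Mathlib

section
/- Let p and q be probability density functions on ℝⁿ (nonnegative, integrating to 1) with q(u) > 0 and p(u) > 0 for all u. Among all measurable functions T : ℝⁿ → ℝ, the functional F(T) = ∫ p(u)·log(1 − σ(T(u))) du + ∫ q(u)·log(σ(T(u))) du is maximized by T*(u) = log q(u) − log p(u), where σ is the logistic sigmoid; i.e., F(T) ≤ F(T*) for all measurable T. -/
/-!
Pointwise, for `a = p u`, `b = q u` and `s = σ (T u) ∈ (0, 1)`, the integrand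
`a log (1 - s) + b log s` is maximised at `s = b / (a + b)`, which is exactly `σ (log b - log a)`.
The pointwise bound is Gibbs' inequality for two-point distributions, obtained from
`log x ≤ x - 1`; integrating it gives the theorem.
-/

open MeasureTheory Real

noncomputable def logistic (x : ℝ) : ℝ := 1 / (1 + exp (-x))

lemma logistic_pos (x : ℝ) : 0 < logistic x := by
  unfold logistic
  positivity

lemma logistic_lt_one (x : ℝ) : logistic x < 1 := by
  rw [logistic, div_lt_one (by positivity)]
  linarith [exp_pos (-x)]

lemma logistic_log_sub_log {a b : ℝ} (ha : 0 < a) (hb : 0 < b) :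
    logistic (log b - log a) = b / (a + b) := by
  rw [logistic, neg_sub, exp_sub, exp_log ha, exp_log hb]
  field_simp
  ring

lemma mul_log_le_mul_log_div_add {a c x : ℝ} (ha : 0 < a) (hc : 0 < c) (hx : 0 < x) :
    a * log x ≤ a * log (a / c) + c * x - a := by
  have hlog : log (c * x / a) ≤ c * x / a - 1 := log_le_sub_one_of_pos (by positivity)
  rw [log_div (by positivity) ha.ne', log_mul hc.ne' hx.ne'] at hlog
  rw [log_div ha.ne' hc.ne']
  have hscaled := mul_le_mul_of_nonneg_left hlog ha.le
  rw [mul_sub_one, mul_div_cancel₀ _ ha.ne'] at hscaled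
  linarith

lemma mul_log_one_sub_add_mul_log_le {a b s : ℝ} (ha : 0 < a) (hb : 0 < b)
    (hs₀ : 0 < s) (hs₁ : s < 1) :
    a * log (1 - s) + b * log s ≤ a * log (a / (a + b)) + b * log (b / (a + b)) := by
  have hab : 0 < a + b := by linarith
  have h₁ := mul_log_le_mul_log_div_add ha hab (sub_pos.2 hs₁)
  have h₂ := mul_log_le_mul_log_div_add hb hab hs₀
  -- the linear terms cancel: `(a + b) (1 - s) - a + (a + b) s - b = 0`
  linarith

theorem stmt_3_general (n : ℕ) (σ : ℝ → ℝ) (hσ : ∀ x, σ x = 1 / (1 + Real.exp (-x)))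
    (p q : (Fin n → ℝ) → ℝ)
    (hp : ∀ u, 0 < p u) (hq : ∀ u, 0 < q u)
    (T : (Fin n → ℝ) → ℝ)
    (hint1 : Integrable fun u => p u * Real.log (1 - σ (T u)))
    (hint2 : Integrable fun u => q u * Real.log (σ (T u)))
    (hint3 : Integrable fun u => p u * Real.log (1 - σ (Real.log (q u) - Real.log (p u))))
    (hint4 : Integrable fun u => q u * Real.log (σ (Real.log (q u) - Real.log (p u)))) :
    (∫ u, p u * Real.log (1 - σ (T u))) + (∫ u, q u * Real.log (σ (T u))) ≤
      (∫ u, p u * Real.log (1 - σ (Real.log (q u) - Real.log (p u)))) +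
        (∫ u, q u * Real.log (σ (Real.log (q u) - Real.log (p u)))) := by
  obtain rfl : σ = logistic := funext hσ
  rw [← integral_add hint1 hint2, ← integral_add hint3 hint4]
  refine integral_mono (hint1.add hint2) (hint3.add hint4) fun u => ?_
  have hpq : p u + q u ≠ 0 := (add_pos (hp u) (hq u)).ne'
  have h_one_sub : 1 - q u / (p u + q u) = p u / (p u + q u) := by
    field_simp
    ring
  simp only [logistic_log_sub_log (hp u) (hq u), h_one_sub]
  exact mul_log_one_sub_add_mul_log_le (hp u) (hq u) (logistic_pos _) (logistic_lt_one _)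

/-- The functional `F(T) = ∫ p log(1 - σ(T)) + ∫ q log(σ(T))` over measurable `T : ℝⁿ → ℝ`
is maximized by the log-density ratio `T*(u) = log q(u) - log p(u)`. -/
theorem stmt_3 (n : ℕ) (σ : ℝ → ℝ) (hσ : ∀ x, σ x = 1 / (1 + Real.exp (-x)))
    (p q : (Fin n → ℝ) → ℝ) (hpm : Measurable p) (hqm : Measurable q)
    (hp : ∀ u, 0 < p u) (hq : ∀ u, 0 < q u)
    (hp1 : ∫ u, p u = 1) (hq1 : ∫ u, q u = 1)
    (T : (Fin n → ℝ) → ℝ) (hT : Measurable T)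
    (hint1 : Integrable fun u => p u * Real.log (1 - σ (T u)))
    (hint2 : Integrable fun u => q u * Real.log (σ (T u)))
    (hint3 : Integrable fun u => p u * Real.log (1 - σ (Real.log (q u) - Real.log (p u))))
    (hint4 : Integrable fun u => q u * Real.log (σ (Real.log (q u) - Real.log (p u)))) :
    (∫ u, p u * Real.log (1 - σ (T u))) + (∫ u, q u * Real.log (σ (T u))) ≤
      (∫ u, p u * Real.log (1 - σ (Real.log (q u) - Real.log (p u)))) +
        (∫ u, q u * Real.log (σ (Real.log (q u) - Real.log (p u)))) :=
  stmt_3_general n σ hσ p q hp hq T hint1 hint2 hint3 hint4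
end

section
/- Let p, q be strictly positive probability densities w.r.t. μ. Then ∫ p·log((p)/((p+q)/2)) dμ + ∫ q·log((q)/((p+q)/2)) dμ ≥ 0, with equality iff p = q a.e.; i.e., the Jensen–Shannon-type functional ∫ p·log(1 − σ(T(u))) dμ + ∫ q·log(σ(T(u))) dμ evaluated at the optimal T* equals −2·log 2 + 2·JSD(p‖q) ≥ −2·log 2, with equality iff p = q a.e. -/
/-!
With `m = (p + q) / 2`, the pointwise integrand `p log (p / m) + q log (q / m)` equals
`m (klFun (p / m) + klFun (q / m))`, where `klFun x = x log x + 1 - x ≥ 0` vanishes only at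
`x = 1`; hence the integral is nonnegative and vanishes iff `p = q` a.e. At `T* = log q - log p`
one has `σ (T*) = q / (p + q)`, so the discriminator objective is the same integral shifted by
`-log 2 ∫ p - log 2 ∫ q = -2 log 2`.
-/

open MeasureTheory Real InformationTheory

noncomputable def jensenShannonIntegrand (a b : ℝ) : ℝ :=
  a * log (a / ((a + b) / 2)) + b * log (b / ((a + b) / 2))

lemma jensenShannonIntegrand_eq_klFun {a b : ℝ} (ha : 0 < a) (hb : 0 < b) :
    jensenShannonIntegrand a b =
      (a + b) / 2 * (klFun (a / ((a + b) / 2)) + klFun (b / ((a + b) / 2))) := by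
  have hm : (a + b) / 2 ≠ 0 := by positivity
  simp only [jensenShannonIntegrand, klFun_apply, mul_add, mul_sub, ← mul_assoc,
    mul_div_cancel₀ _ hm]
  ring

lemma jensenShannonIntegrand_nonneg {a b : ℝ} (ha : 0 < a) (hb : 0 < b) :
    0 ≤ jensenShannonIntegrand a b := by
  rw [jensenShannonIntegrand_eq_klFun ha hb]
  exact mul_nonneg (by positivity)
    (add_nonneg (klFun_nonneg (by positivity)) (klFun_nonneg (by positivity)))

lemma jensenShannonIntegrand_eq_zero_iff {a b : ℝ} (ha : 0 < a) (hb : 0 < b) :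
    jensenShannonIntegrand a b = 0 ↔ a = b := by
  have hm : 0 < (a + b) / 2 := by positivity
  have hka := klFun_nonneg (div_pos ha hm).le
  have hkb := klFun_nonneg (div_pos hb hm).le
  rw [jensenShannonIntegrand_eq_klFun ha hb, mul_eq_zero, or_iff_right hm.ne',
    add_eq_zero_iff_of_nonneg hka hkb, klFun_eq_zero_iff (div_pos ha hm).le,
    klFun_eq_zero_iff (div_pos hb hm).le, div_eq_one_iff_eq hm.ne', div_eq_one_iff_eq hm.ne']
  constructor
  · rintro ⟨h, -⟩; linarith
  · rintro rfl; constructor <;> ring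

lemma integral_jensenShannonIntegrand_eq_zero_iff {Ω : Type*} [MeasurableSpace Ω]
    {μ : Measure Ω} {p q : Ω → ℝ} (hp : ∀ u, 0 < p u) (hq : ∀ u, 0 < q u)
    (hint : Integrable (fun u => jensenShannonIntegrand (p u) (q u)) μ) :
    ∫ u, jensenShannonIntegrand (p u) (q u) ∂μ = 0 ↔ p =ᵐ[μ] q := by
  rw [integral_eq_zero_iff_of_nonneg
    (fun u => jensenShannonIntegrand_nonneg (hp u) (hq u)) hint]
  exact Filter.eventually_congr
    (.of_forall fun u => jensenShannonIntegrand_eq_zero_iff (hp u) (hq u))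

namespace Real

lemma sigmoid_log_sub_log {a b : ℝ} (ha : 0 < a) (hb : 0 < b) :
    sigmoid (log b - log a) = b / (a + b) := by
  rw [sigmoid_def, neg_sub, exp_sub, exp_log ha, exp_log hb]
  field_simp
  ring

lemma log_sigmoid_log_sub_log {a b : ℝ} (ha : 0 < a) (hb : 0 < b) :
    log (sigmoid (log b - log a)) = log (b / ((a + b) / 2)) - log 2 := by
  rw [sigmoid_log_sub_log ha hb, ← log_div (by positivity) two_ne_zero]
  congr 1
  field_simp

lemma log_one_sub_sigmoid_log_sub_log {a b : ℝ} (ha : 0 < a) (hb : 0 < b) :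
    log (1 - sigmoid (log b - log a)) = log (a / ((a + b) / 2)) - log 2 := by
  rw [← sigmoid_neg, neg_sub, log_sigmoid_log_sub_log hb ha, add_comm]

end Real

lemma integral_mul_sub_const_of_integral_eq_one {Ω : Type*} [MeasurableSpace Ω]
    {μ : Measure Ω} {g f : Ω → ℝ} (hgf : Integrable (fun u => g u * f u) μ)
    (hg : ∫ u, g u ∂μ = 1) (c : ℝ) :
    ∫ u, g u * (f u - c) ∂μ = ∫ u, g u * f u ∂μ - c := by
  have hg_int : Integrable g μ := .of_integral_ne_zero (by rw [hg]; exact one_ne_zero)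
  simp only [mul_sub]
  rw [integral_sub hgf (hg_int.mul_const c), integral_mul_const, hg, one_mul]

theorem stmt_13_general {Ω : Type*} [MeasurableSpace Ω] (μ : Measure Ω)
    (σ : ℝ → ℝ) (hσ : ∀ x, σ x = 1 / (1 + Real.exp (-x)))
    (p q : Ω → ℝ)
    (hp : ∀ u, 0 < p u) (hq : ∀ u, 0 < q u)
    (hp1 : ∫ u, p u ∂μ = 1) (hq1 : ∫ u, q u ∂μ = 1)
    (hint1 : Integrable (fun u => p u * Real.log (p u / ((p u + q u) / 2))) μ)
    (hint2 : Integrable (fun u => q u * Real.log (q u / ((p u + q u) / 2))) μ) :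
    (0 ≤ (∫ u, p u * Real.log (p u / ((p u + q u) / 2)) ∂μ) +
          (∫ u, q u * Real.log (q u / ((p u + q u) / 2)) ∂μ)) ∧
    ((∫ u, p u * Real.log (p u / ((p u + q u) / 2)) ∂μ) +
          (∫ u, q u * Real.log (q u / ((p u + q u) / 2)) ∂μ) = 0 ↔ p =ᵐ[μ] q) ∧
    ((∫ u, p u * Real.log (1 - σ (Real.log (q u) - Real.log (p u))) ∂μ) +
        (∫ u, q u * Real.log (σ (Real.log (q u) - Real.log (p u))) ∂μ) =
      -2 * Real.log 2 +
        ((∫ u, p u * Real.log (p u / ((p u + q u) / 2)) ∂μ) +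
          (∫ u, q u * Real.log (q u / ((p u + q u) / 2)) ∂μ))) ∧
    (-2 * Real.log 2 ≤
      (∫ u, p u * Real.log (1 - σ (Real.log (q u) - Real.log (p u))) ∂μ) +
        (∫ u, q u * Real.log (σ (Real.log (q u) - Real.log (p u))) ∂μ)) ∧
    ((∫ u, p u * Real.log (1 - σ (Real.log (q u) - Real.log (p u))) ∂μ) +
        (∫ u, q u * Real.log (σ (Real.log (q u) - Real.log (p u))) ∂μ) =
      -2 * Real.log 2 ↔ p =ᵐ[μ] q) := by
  obtain rfl : σ = sigmoid := funext fun x => by rw [hσ, sigmoid_def, one_div]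
  have hJ : (∫ u, p u * log (p u / ((p u + q u) / 2)) ∂μ) +
      (∫ u, q u * log (q u / ((p u + q u) / 2)) ∂μ) =
      ∫ u, jensenShannonIntegrand (p u) (q u) ∂μ := (integral_add hint1 hint2).symm
  have hD : (∫ u, p u * log (1 - sigmoid (log (q u) - log (p u))) ∂μ) +
      (∫ u, q u * log (sigmoid (log (q u) - log (p u))) ∂μ) =
      -2 * log 2 + ((∫ u, p u * log (p u / ((p u + q u) / 2)) ∂μ) +
        (∫ u, q u * log (q u / ((p u + q u) / 2)) ∂μ)) := by
    simp only [log_one_sub_sigmoid_log_sub_log, log_sigmoid_log_sub_log, hp, hq]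
    rw [integral_mul_sub_const_of_integral_eq_one hint1 hp1,
      integral_mul_sub_const_of_integral_eq_one hint2 hq1]
    ring
  have hJ_nonneg : 0 ≤ ∫ u, jensenShannonIntegrand (p u) (q u) ∂μ :=
    integral_nonneg fun u => jensenShannonIntegrand_nonneg (hp u) (hq u)
  have hJ_eq_zero := integral_jensenShannonIntegrand_eq_zero_iff hp hq (hint1.add hint2)
  rw [hD, hJ]
  exact ⟨hJ_nonneg, hJ_eq_zero, rfl, by linarith, add_eq_left.trans hJ_eq_zero⟩

/-- Jensen–Shannon-type inequality: for strictly positive densities `p, q`,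
`KL(p‖(p+q)/2) + KL(q‖(p+q)/2) ≥ 0` with equality iff `p = q` a.e.; moreover the
discriminator objective evaluated at the optimal `T* = log q - log p` equals
`-2 log 2 + (KL(p‖(p+q)/2) + KL(q‖(p+q)/2)) ≥ -2 log 2`, with equality iff `p = q` a.e. -/
theorem stmt_13 {Ω : Type*} [MeasurableSpace Ω] (μ : Measure Ω) [SigmaFinite μ]
    (σ : ℝ → ℝ) (hσ : ∀ x, σ x = 1 / (1 + Real.exp (-x)))
    (p q : Ω → ℝ) (hpm : Measurable p) (hqm : Measurable q)
    (hp : ∀ u, 0 < p u) (hq : ∀ u, 0 < q u)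
    (hp1 : ∫ u, p u ∂μ = 1) (hq1 : ∫ u, q u ∂μ = 1)
    (hint1 : Integrable (fun u => p u * Real.log (p u / ((p u + q u) / 2))) μ)
    (hint2 : Integrable (fun u => q u * Real.log (q u / ((p u + q u) / 2))) μ)
    (hint3 : Integrable (fun u => p u * Real.log (1 - σ (Real.log (q u) - Real.log (p u)))) μ)
    (hint4 : Integrable (fun u => q u * Real.log (σ (Real.log (q u) - Real.log (p u)))) μ) :
    (0 ≤ (∫ u, p u * Real.log (p u / ((p u + q u) / 2)) ∂μ) +
          (∫ u, q u * Real.log (q u / ((p u + q u) / 2)) ∂μ)) ∧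
    ((∫ u, p u * Real.log (p u / ((p u + q u) / 2)) ∂μ) +
          (∫ u, q u * Real.log (q u / ((p u + q u) / 2)) ∂μ) = 0 ↔ p =ᵐ[μ] q) ∧
    ((∫ u, p u * Real.log (1 - σ (Real.log (q u) - Real.log (p u))) ∂μ) +
        (∫ u, q u * Real.log (σ (Real.log (q u) - Real.log (p u))) ∂μ) =
      -2 * Real.log 2 +
        ((∫ u, p u * Real.log (p u / ((p u + q u) / 2)) ∂μ) +
          (∫ u, q u * Real.log (q u / ((p u + q u) / 2)) ∂μ))) ∧
    (-2 * Real.log 2 ≤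
      (∫ u, p u * Real.log (1 - σ (Real.log (q u) - Real.log (p u))) ∂μ) +
        (∫ u, q u * Real.log (σ (Real.log (q u) - Real.log (p u))) ∂μ)) ∧
    ((∫ u, p u * Real.log (1 - σ (Real.log (q u) - Real.log (p u))) ∂μ) +
        (∫ u, q u * Real.log (σ (Real.log (q u) - Real.log (p u))) ∂μ) =
      -2 * Real.log 2 ↔ p =ᵐ[μ] q) :=
  stmt_13_general μ σ hσ p q hp hq hp1 hq1 hint1 hint2
end
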